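/- The capped expectation is bounded below by α times CVaR plus the truncated remainder: for a bounded real random variable Z, α ∈ (0,1), and any C ≥ VaR_α(Z), one has E[min(Z, C)] ≥ α · CVaR_α(Z) + (1 − α) · VaR_α(Z). -/

import Mathlib

/-!
Write `t = VaR_α(Z)`, so that `min(Z, t) = t - (t - Z)⁺`. The quantile function is the
generalized inverse of the distribution function, `VaR_x(Z) ≤ z ↔ x ≤ P(Z ≤ z)` for
`0 < x < 1` (by right continuity of the CDF), so Fubini computes both `E[(t - Z)⁺]` and
`∫_0^α (t - VaR_x(Z)) dx` as `∫_{z < t} P(Z ≤ z) dz`. Hence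
`E[min(Z, t)] = α · CVaR_α(Z) + (1 - α) · t`, and `min(Z, t) ≤ min(Z, C)`.
-/

open MeasureTheory

noncomputable def VaR {Ω : Type*} [MeasurableSpace Ω] (μ : Measure Ω) (Z : Ω → ℝ) (x : ℝ) : ℝ :=
  sInf {z : ℝ | x ≤ (μ {ω | Z ω ≤ z}).toReal}

noncomputable def CVaR {Ω : Type*} [MeasurableSpace Ω] (μ : Measure Ω) (Z : Ω → ℝ) (α : ℝ) : ℝ :=
  (1 / α) * ∫ x in (0:ℝ)..α, VaR μ Z x

open ProbabilityTheory Set Filter Topology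

lemma StieltjesFunction.sInf_le_iff (f : StieltjesFunction ℝ) {x z : ℝ}
    (hne : {y | x ≤ f y}.Nonempty) (hbdd : BddBelow {y | x ≤ f y}) :
    sInf {y | x ≤ f y} ≤ z ↔ x ≤ f z := by
  refine ⟨fun h => ?_, fun h => csInf_le hbdd h⟩
  have hlim : Tendsto f (𝓝[>] z) (𝓝 (f z)) :=
    (f.right_continuous z).tendsto.mono_left (nhdsWithin_mono _ Ioi_subset_Ici_self)
  refine ge_of_tendsto hlim (eventually_nhdsWithin_of_forall fun w hw => ?_)
  obtain ⟨y, hy, hyw⟩ := exists_lt_of_csInf_lt hne (h.trans_lt hw)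
  exact hy.trans (f.mono hyw.le)

lemma lintegral_ofReal_sub_eq_setLIntegral_measure_le {X : Type*} [MeasurableSpace X]
    (ρ : Measure X) [SFinite ρ] {g : X → ℝ} (hg : AEMeasurable g ρ) (t : ℝ) :
    ∫⁻ x, ENNReal.ofReal (t - g x) ∂ρ = ∫⁻ z in Iio t, ρ {x | g x ≤ z} := by
  obtain ⟨h, hh, hgh⟩ := hg
  have hs : MeasurableSet {p : X × ℝ | h p.1 ≤ p.2} :=
    measurableSet_le (hh.comp measurable_fst) measurable_snd
  calc ∫⁻ x, ENNReal.ofReal (t - g x) ∂ρ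
      = ∫⁻ x, volume.restrict (Iio t) (Ici (h x)) ∂ρ := by
        refine lintegral_congr_ae (hgh.mono fun x hx => ?_)
        dsimp only
        rw [Measure.restrict_apply measurableSet_Ici, Ici_inter_Iio, Real.volume_Ico, hx]
    _ = (ρ.prod (volume.restrict (Iio t))) {p | h p.1 ≤ p.2} := (Measure.prod_apply hs).symm
    _ = ∫⁻ z in Iio t, ρ {x | h x ≤ z} := Measure.prod_apply_symm hs
    _ = ∫⁻ z in Iio t, ρ {x | g x ≤ z} :=
        lintegral_congr fun z =>
          measure_congr (hgh.mono fun x hx => show (h x ≤ z) = (g x ≤ z) by rw [hx])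

section VaR

variable {Ω : Type*} [MeasurableSpace Ω] {μ : Measure Ω} [IsProbabilityMeasure μ]
  {Z : Ω → ℝ}

lemma toReal_measure_le_eq_cdf_map (hZ : Measurable Z) (z : ℝ) :
    (μ {ω | Z ω ≤ z}).toReal = cdf (μ.map Z) z := by
  have := Measure.isProbabilityMeasure_map (μ := μ) hZ.aemeasurable
  rw [cdf_eq_real, measureReal_def, Measure.map_apply hZ measurableSet_Iic]
  rfl

lemma VaR_le_iff (hZ : Measurable Z) {x z : ℝ} (hx0 : 0 < x) (hx1 : x < 1) :
    VaR μ Z x ≤ z ↔ x ≤ (μ {ω | Z ω ≤ z}).toReal := by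
  simp only [VaR, toReal_measure_le_eq_cdf_map hZ]
  set F := cdf (μ.map Z)
  refine F.sInf_le_iff ?_ ?_
  · exact ((tendsto_cdf_atTop _).eventually (eventually_ge_nhds hx1)).exists
  · obtain ⟨b, hb⟩ :=
      eventually_atBot.1 ((tendsto_cdf_atBot _).eventually (eventually_lt_nhds hx0))
    exact ⟨b, fun y hy => le_of_not_gt fun hyb => (hb y hyb.le).not_ge hy⟩

lemma VaR_monotoneOn (hZ : Measurable Z) : MonotoneOn (VaR μ Z) (Ioo 0 1) := by
  intro x hx y hy hxy
  rw [VaR_le_iff hZ hx.1 hx.2]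
  exact hxy.trans ((VaR_le_iff hZ hy.1 hy.2).1 le_rfl)

lemma aemeasurable_VaR_restrict_Ioc (hZ : Measurable Z) {α : ℝ} (hα1 : α < 1) :
    AEMeasurable (VaR μ Z) (volume.restrict (Ioc 0 α)) :=
  aemeasurable_restrict_of_monotoneOn measurableSet_Ioc
    ((VaR_monotoneOn hZ).mono fun _ hx => ⟨hx.1, hx.2.trans_lt hα1⟩)

lemma setLIntegral_ofReal_VaR_sub_eq_lintegral (hZ : Measurable Z) {α : ℝ} (hα0 : 0 < α)
    (hα1 : α < 1) :
    ∫⁻ x in Ioc 0 α, ENNReal.ofReal (VaR μ Z α - VaR μ Z x) =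
      ∫⁻ ω, ENNReal.ofReal (VaR μ Z α - Z ω) ∂μ := by
  rw [lintegral_ofReal_sub_eq_setLIntegral_measure_le _ (aemeasurable_VaR_restrict_Ioc hZ hα1),
    lintegral_ofReal_sub_eq_setLIntegral_measure_le _ hZ.aemeasurable]
  refine setLIntegral_congr_fun measurableSet_Iio fun z hz => ?_
  have hFz : (μ {ω | Z ω ≤ z}).toReal < α :=
    lt_of_not_ge fun h => hz.not_ge ((VaR_le_iff hZ hα0 hα1).2 h)
  have hset : {x | VaR μ Z x ≤ z} ∩ Ioc 0 α = Ioc 0 (μ {ω | Z ω ≤ z}).toReal := by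
    ext x
    constructor
    · rintro ⟨hxz, hx0, hxα⟩
      exact ⟨hx0, (VaR_le_iff hZ hx0 (hxα.trans_lt hα1)).1 hxz⟩
    · rintro ⟨hx0, hxF⟩
      have hxα : x ≤ α := hxF.trans hFz.le
      exact ⟨(VaR_le_iff hZ hx0 (hxα.trans_lt hα1)).2 hxF, hx0, hxα⟩
  rw [Measure.restrict_apply' measurableSet_Ioc, hset, Real.volume_Ioc, sub_zero,
    ENNReal.ofReal_toReal (measure_ne_top μ _)]

lemma integral_min_const_eq (hZi : Integrable Z μ) (t : ℝ) :
    ∫ ω, min (Z ω) t ∂μ = t - (∫⁻ ω, ENNReal.ofReal (t - Z ω) ∂μ).toReal := by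
  have hpt : ∀ ω, min (Z ω) t = t - max (t - Z ω) 0 := fun ω => by
    rw [← min_sub_sub_left, sub_sub_cancel, sub_zero]
  have hshortfall :
      ∫ ω, max (t - Z ω) 0 ∂μ = (∫⁻ ω, ENNReal.ofReal (t - Z ω) ∂μ).toReal := by
    rw [integral_eq_lintegral_of_nonneg_ae (f := fun ω => max (t - Z ω) 0)
      (ae_of_all _ fun _ => le_max_right _ _) (by fun_prop)]
    simp
  simp_rw [hpt]
  rw [integral_sub (g := fun ω => max (t - Z ω) 0) (integrable_const t)
      ((integrable_const t).sub hZi).pos_part,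
    integral_const, hshortfall, probReal_univ, one_smul]

lemma mul_CVaR_eq (hZ : Measurable Z) (hZi : Integrable Z μ) {α : ℝ} (hα0 : 0 < α)
    (hα1 : α < 1) :
    α * CVaR μ Z α =
      α * VaR μ Z α - (∫⁻ ω, ENNReal.ofReal (VaR μ Z α - Z ω) ∂μ).toReal := by
  set t := VaR μ Z α
  have hmeas : AEMeasurable (fun x => t - VaR μ Z x) (volume.restrict (Ioc 0 α)) :=
    aemeasurable_const.sub (aemeasurable_VaR_restrict_Ioc hZ hα1)
  have hnonneg : 0 ≤ᵐ[volume.restrict (Ioc 0 α)] fun x => t - VaR μ Z x :=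
    (ae_restrict_iff' measurableSet_Ioc).2 <| ae_of_all _ fun x hx =>
      sub_nonneg.2 <| VaR_monotoneOn hZ ⟨hx.1, hx.2.trans_lt hα1⟩ ⟨hα0, hα1⟩ hx.2
  have hint : Integrable (fun x => t - VaR μ Z x) (volume.restrict (Ioc 0 α)) := by
    refine (lintegral_ofReal_ne_top_iff_integrable hmeas.aestronglyMeasurable hnonneg).1 ?_
    rw [setLIntegral_ofReal_VaR_sub_eq_lintegral hZ hα0 hα1]
    exact ((integrable_const t).sub hZi).lintegral_lt_top.ne
  rw [CVaR, one_div, ← mul_assoc, mul_inv_cancel₀ hα0.ne', one_mul,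
    intervalIntegral.integral_of_le hα0.le]
  calc ∫ x in Ioc 0 α, VaR μ Z x = ∫ x in Ioc 0 α, (t - (t - VaR μ Z x)) := by
        simp only [sub_sub_cancel]
    _ = α * t - (∫⁻ x in Ioc 0 α, ENNReal.ofReal (t - VaR μ Z x)).toReal := by
        rw [integral_sub (integrable_const t) hint, setIntegral_const,
          Real.volume_real_Ioc_of_le hα0.le, sub_zero, smul_eq_mul,
          integral_eq_lintegral_of_nonneg_ae hnonneg hmeas.aestronglyMeasurable]
    _ = α * t - (∫⁻ ω, ENNReal.ofReal (t - Z ω) ∂μ).toReal := by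
        rw [setLIntegral_ofReal_VaR_sub_eq_lintegral hZ hα0 hα1]

lemma integral_min_VaR_eq (hZ : Measurable Z) (hZi : Integrable Z μ) {α : ℝ} (hα0 : 0 < α)
    (hα1 : α < 1) :
    ∫ ω, min (Z ω) (VaR μ Z α) ∂μ = α * CVaR μ Z α + (1 - α) * VaR μ Z α := by
  rw [integral_min_const_eq hZi, mul_CVaR_eq hZ hZi hα0 hα1]
  ring

end VaR

theorem capped_expectation_lower_bound {Ω : Type*} [MeasurableSpace Ω] (μ : Measure Ω) [IsProbabilityMeasure μ]
    (Z : Ω → ℝ) (hZ : Measurable Z) (M : ℝ) (hbd : ∀ ω, |Z ω| ≤ M)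
    (α : ℝ) (hα : 0 < α) (hα1 : α < 1) (C : ℝ) (hC : VaR μ Z α ≤ C) :
    α * CVaR μ Z α + (1 - α) * VaR μ Z α ≤ ∫ ω, min (Z ω) C ∂μ := by
  have hZi : Integrable Z μ := .of_bound hZ.aestronglyMeasurable M
    (ae_of_all _ fun ω => (Real.norm_eq_abs _).trans_le (hbd ω))
  rw [← integral_min_VaR_eq hZ hZi hα hα1]
  exact integral_mono (hZi.inf (integrable_const _)) (hZi.inf (integrable_const C))
    fun ω => min_le_min_left _ hC
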